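/- arXiv:2405.16564 — 2 statements merged into one kernel-verified Lean document; each statement's English description precedes it below -/
import Mathlib

section
/- Assume ignorability. For any bounded measurable f : ℝ^p → ℝ^d, any bounded measurable H : ℝ^p → ℝ^{d×d}, and any policy π: E[(f(X) + H(X) Z (C − Zᵀ f(X)))ᵀ π(X)] − E[f₀(X)ᵀ π(X)] = E[π(X)ᵀ (I − H(X) Σ₀(X)) (f(X) − f₀(X))]. -/
/-!
The weight `φ = π(X)ᵀ H(X) Z` is `σ(X, Z)`-measurable, so ignorability lets one replace `C` by
`Zᵀ f₀(X)` in `E[φ C]`; the correction term of the score then contributes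
`-E[π(X)ᵀ H(X) Z Zᵀ (f - f₀)(X)]`, and conditioning on `X` turns `Z Zᵀ` into `Σ₀(X)`.
-/

open MeasureTheory Matrix
open scoped ENNReal

section Algebra

variable {n R : Type*} [Fintype n] [CommRing R]

theorem add_mulVec_smul_dotProduct (g P z : n → R) (A : Matrix n n R) (c : R) :
    (g + A *ᵥ ((c - z ⬝ᵥ g) • z)) ⬝ᵥ P = g ⬝ᵥ P + (c - z ⬝ᵥ g) * ((P ᵥ* A) ⬝ᵥ z) := by
  rw [add_dotProduct, mulVec_smul, smul_dotProduct, smul_eq_mul, dotProduct_comm (A *ᵥ _),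
    dotProduct_mulVec]

theorem dotProduct_one_sub_mul_mulVec [DecidableEq n] (P u : n → R) (A S : Matrix n n R) :
    P ⬝ᵥ (1 - A * S) *ᵥ u = u ⬝ᵥ P - (P ᵥ* A) ⬝ᵥ S *ᵥ u := by
  rw [sub_mulVec, one_mulVec, dotProduct_sub, dotProduct_comm, ← mulVec_mulVec,
    dotProduct_mulVec]

theorem dotProduct_mul_dotProduct_eq_sum (a z b : n → R) :
    (a ⬝ᵥ z) * (z ⬝ᵥ b) = ∑ ij : n × n, a ij.1 * b ij.2 * (z ij.1 * z ij.2) := by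
  rw [dotProduct, dotProduct, Finset.sum_mul_sum, ← Finset.sum_product']
  exact Finset.sum_congr rfl fun _ _ => by ring

theorem dotProduct_mulVec_eq_sum (a b : n → R) (S : Matrix n n R) :
    a ⬝ᵥ S *ᵥ b = ∑ ij : n × n, a ij.1 * b ij.2 * S ij.1 ij.2 := by
  simp only [dotProduct, mulVec, Finset.mul_sum, ← Finset.sum_product']
  exact Finset.sum_congr rfl fun _ _ => by ring

end Algebra

theorem integral_mul_eq_integral_mul_of_ae_eq_condExp {Ω : Type*} {m m₀ : MeasurableSpace Ω}
    {μ : Measure Ω} (hm : m ≤ m₀) [SigmaFinite (μ.trim hm)] {ψ h h' : Ω → ℝ}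
    (hψ : AEStronglyMeasurable[m] ψ μ) (hψh : Integrable (fun ω => ψ ω * h ω) μ)
    (hh : Integrable h μ) (hh' : h' =ᵐ[μ] μ[h|m]) :
    ∫ ω, ψ ω * h ω ∂μ = ∫ ω, ψ ω * h' ω ∂μ := by
  rw [← integral_condExp hm]
  refine integral_congr_ae ?_
  filter_upwards [condExp_mul_of_aestronglyMeasurable_left hψ hψh hh, hh'] with ω hψh' hh''
  exact hψh'.trans (by rw [Pi.mul_apply, hh''])

section Coordinates

variable {Ω n : Type*} [Fintype n]

theorem measurable_dotProduct {mΩ : MeasurableSpace Ω} {a b : Ω → n → ℝ}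
    (ha : ∀ i, Measurable fun ω => a ω i) (hb : ∀ i, Measurable fun ω => b ω i) :
    Measurable fun ω => a ω ⬝ᵥ b ω :=
  Finset.measurable_sum _ fun i _ => (ha i).mul (hb i)

variable {mΩ : MeasurableSpace Ω} {μ : Measure Ω} {p q r : ℝ≥0∞} [p.HolderTriple q r]

theorem memLp_dotProduct {a b : Ω → n → ℝ} (ha : ∀ i, MemLp (fun ω => a ω i) p μ)
    (hb : ∀ i, MemLp (fun ω => b ω i) q μ) : MemLp (fun ω => a ω ⬝ᵥ b ω) r μ :=
  memLp_finsetSum _ fun i _ => (hb i).mul' (ha i)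

theorem memLp_mulVec {m : Type*} {A : Ω → Matrix m n ℝ} {b : Ω → n → ℝ}
    (hA : ∀ i j, MemLp (fun ω => A ω i j) p μ) (hb : ∀ i, MemLp (fun ω => b ω i) q μ) (i : m) :
    MemLp (fun ω => (A ω *ᵥ b ω) i) r μ :=
  memLp_dotProduct (hA i) hb

theorem memLp_vecMul {m : Type*} {a : Ω → n → ℝ} {A : Ω → Matrix n m ℝ}
    (ha : ∀ i, MemLp (fun ω => a ω i) p μ) (hA : ∀ i j, MemLp (fun ω => A ω i j) q μ) (j : m) :
    MemLp (fun ω => (a ω ᵥ* A ω) j) r μ :=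
  memLp_dotProduct ha fun i => hA i j

theorem memLp_top_apply_of_norm_le {F : Ω → n → ℝ} (hF : Measurable F) {M : ℝ}
    (hM : ∀ ω, ‖F ω‖ ≤ M) (i : n) : MemLp (fun ω => F ω i) ∞ μ :=
  memLp_top_of_bound ((measurable_pi_apply i).comp hF).aestronglyMeasurable M
    (ae_of_all _ fun ω => (norm_le_pi_norm (F ω) i).trans (hM ω))

end Coordinates

section SecondMoment

variable {Ω n : Type*} [Fintype n] {m₁ m₂ m₀ : MeasurableSpace Ω} {μ : Measure Ω}

theorem integrable_dotProduct_mulVec {a b : Ω → n → ℝ} {S : Ω → Matrix n n ℝ}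
    (ha : ∀ i, MemLp (fun ω => a ω i) ∞ μ) (hS : ∀ i j, Integrable (fun ω => S ω i j) μ)
    (hb : ∀ i, MemLp (fun ω => b ω i) ∞ μ) : Integrable (fun ω => a ω ⬝ᵥ S ω *ᵥ b ω) μ :=
  memLp_one_iff_integrable.mp <|
    memLp_dotProduct (q := 1) ha <|
      memLp_mulVec (p := 1) (fun i j => memLp_one_iff_integrable.2 (hS i j)) hb

theorem integral_dotProduct_mul_dotProduct_eq_of_condExp [IsFiniteMeasure μ] (hm : m₁ ≤ m₀)
    {a b Z : Ω → n → ℝ} {S : Ω → Matrix n n ℝ}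
    (ham : ∀ i, AEStronglyMeasurable[m₁] (fun ω => a ω i) μ)
    (hbm : ∀ i, AEStronglyMeasurable[m₁] (fun ω => b ω i) μ)
    (ha : ∀ i, MemLp (fun ω => a ω i) ∞ μ) (hb : ∀ i, MemLp (fun ω => b ω i) ∞ μ)
    (hZ : ∀ i, MemLp (fun ω => Z ω i) ∞ μ)
    (hS : ∀ i j, (fun ω => S ω i j) =ᵐ[μ] μ[fun ω => Z ω i * Z ω j | m₁]) :
    ∫ ω, (a ω ⬝ᵥ Z ω) * (Z ω ⬝ᵥ b ω) ∂μ = ∫ ω, a ω ⬝ᵥ S ω *ᵥ b ω ∂μ := by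
  have hZZ : ∀ i j, MemLp (fun ω => Z ω i * Z ω j) ∞ μ := fun i j => (hZ j).mul' (hZ i)
  have hab : ∀ i j, MemLp (fun ω => a ω i * b ω j) ∞ μ := fun i j => (hb j).mul' (ha i)
  have hSi : ∀ i j, Integrable (fun ω => S ω i j) μ := fun i j =>
    integrable_condExp.congr (hS i j).symm
  simp only [dotProduct_mul_dotProduct_eq_sum, dotProduct_mulVec_eq_sum]
  rw [integral_finsetSum _ fun ij _ => ((hZZ ij.1 ij.2).mul' (hab ij.1 ij.2)).integrable le_top,
    integral_finsetSum _ fun ij _ =>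
      (memLp_one_iff_integrable.2 (hSi ij.1 ij.2)).mul' (hab ij.1 ij.2) |>.integrable le_rfl]
  refine Finset.sum_congr rfl fun ij _ => ?_
  exact integral_mul_eq_integral_mul_of_ae_eq_condExp hm ((ham ij.1).mul (hbm ij.2))
    (((hZZ ij.1 ij.2).mul' (hab ij.1 ij.2)).integrable le_top)
    ((hZZ ij.1 ij.2).integrable le_top) (hS ij.1 ij.2)

theorem integral_doublyRobust_sub_integral [DecidableEq n] [IsFiniteMeasure μ]
    (h₁₂ : m₁ ≤ m₂) (h₂ : m₂ ≤ m₀)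
    {g g₀ P Z : Ω → n → ℝ} {A S : Ω → Matrix n n ℝ} {C : Ω → ℝ}
    (hg : ∀ i, Measurable[m₁] fun ω => g ω i) (hg₀ : ∀ i, Measurable[m₁] fun ω => g₀ ω i)
    (hP : ∀ i, Measurable[m₁] fun ω => P ω i) (hA : ∀ i j, Measurable[m₁] fun ω => A ω i j)
    (hZ : ∀ i, Measurable[m₂] fun ω => Z ω i)
    (hgb : ∀ i, MemLp (fun ω => g ω i) ∞ μ) (hg₀b : ∀ i, MemLp (fun ω => g₀ ω i) ∞ μ)
    (hPb : ∀ i, MemLp (fun ω => P ω i) ∞ μ) (hAb : ∀ i j, MemLp (fun ω => A ω i j) ∞ μ)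
    (hZb : ∀ i, MemLp (fun ω => Z ω i) ∞ μ) (hCb : MemLp C ∞ μ)
    (hS : ∀ i j, (fun ω => S ω i j) =ᵐ[μ] μ[fun ω => Z ω i * Z ω j | m₁])
    (hIgn : (fun ω => Z ω ⬝ᵥ g₀ ω) =ᵐ[μ] μ[C | m₂]) :
    ∫ ω, (g ω + A ω *ᵥ ((C ω - Z ω ⬝ᵥ g ω) • Z ω)) ⬝ᵥ P ω ∂μ - ∫ ω, g₀ ω ⬝ᵥ P ω ∂μ =
      ∫ ω, P ω ⬝ᵥ (1 - A ω * S ω) *ᵥ (g ω - g₀ ω) ∂μ := by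
  have hw : ∀ j, Measurable[m₁] fun ω => (P ω ᵥ* A ω) j := fun j =>
    measurable_dotProduct hP fun i => hA i j
  have hu : ∀ i, Measurable[m₁] fun ω => (g ω - g₀ ω) i := fun i => (hg i).sub (hg₀ i)
  have hwb : ∀ j, MemLp (fun ω => (P ω ᵥ* A ω) j) ∞ μ := memLp_vecMul hPb hAb
  have hub : ∀ i, MemLp (fun ω => (g ω - g₀ ω) i) ∞ μ := fun i => (hgb i).sub (hg₀b i)
  have hφb : MemLp (fun ω => P ω ᵥ* A ω ⬝ᵥ Z ω) ∞ μ := memLp_dotProduct hwb hZb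
  have hφC_eq : ∫ ω, (P ω ᵥ* A ω ⬝ᵥ Z ω) * C ω ∂μ =
      ∫ ω, (P ω ᵥ* A ω ⬝ᵥ Z ω) * (Z ω ⬝ᵥ g₀ ω) ∂μ :=
    integral_mul_eq_integral_mul_of_ae_eq_condExp h₂
      (measurable_dotProduct (fun j => (hw j).mono h₁₂ le_rfl) hZ).aestronglyMeasurable
      ((hCb.mul' hφb).integrable le_top) (hCb.integrable le_top) hIgn
  have hφZZ_eq : ∫ ω, (P ω ᵥ* A ω ⬝ᵥ Z ω) * (Z ω ⬝ᵥ (g ω - g₀ ω)) ∂μ =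
      ∫ ω, P ω ᵥ* A ω ⬝ᵥ S ω *ᵥ (g ω - g₀ ω) ∂μ :=
    integral_dotProduct_mul_dotProduct_eq_of_condExp (h₁₂.trans h₂)
      (fun j => (hw j).aestronglyMeasurable) (fun i => (hu i).aestronglyMeasurable)
      hwb hub hZb hS
  have hgP := (memLp_dotProduct (r := ∞) hgb hPb).integrable (μ := μ) le_top
  have hg₀P := (memLp_dotProduct (r := ∞) hg₀b hPb).integrable (μ := μ) le_top
  have hφC := (hCb.mul' hφb).integrable le_top
  have hφg₀ := ((memLp_dotProduct (r := ∞) hZb hg₀b).mul' hφb).integrable le_top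
  have hφu := ((memLp_dotProduct (r := ∞) hZb hub).mul' hφb).integrable le_top
  have hwSu := integrable_dotProduct_mulVec hwb
    (fun i j => integrable_condExp.congr (hS i j).symm) hub
  have hL : ∀ ω, (g ω + A ω *ᵥ ((C ω - Z ω ⬝ᵥ g ω) • Z ω)) ⬝ᵥ P ω =
      g ω ⬝ᵥ P ω + ((P ω ᵥ* A ω ⬝ᵥ Z ω) * C ω - (P ω ᵥ* A ω ⬝ᵥ Z ω) * (Z ω ⬝ᵥ g₀ ω)) -
        (P ω ᵥ* A ω ⬝ᵥ Z ω) * (Z ω ⬝ᵥ (g ω - g₀ ω)) := fun ω => by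
    rw [add_mulVec_smul_dotProduct, dotProduct_sub]; ring
  have hR : ∀ ω, P ω ⬝ᵥ (1 - A ω * S ω) *ᵥ (g ω - g₀ ω) =
      g ω ⬝ᵥ P ω - g₀ ω ⬝ᵥ P ω - P ω ᵥ* A ω ⬝ᵥ S ω *ᵥ (g ω - g₀ ω) := fun ω => by
    rw [dotProduct_one_sub_mul_mulVec, sub_dotProduct]
  rw [integral_congr_ae (ae_of_all _ hL), integral_congr_ae (ae_of_all _ hR),
    integral_sub (hgP.fun_add (hφC.sub' hφg₀)) hφu, integral_add hgP (hφC.sub' hφg₀),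
    integral_sub hφC hφg₀, integral_sub (hgP.sub' hg₀P) hwSu, integral_sub hgP hg₀P,
    hφC_eq, hφZZ_eq]
  ring

end SecondMoment

theorem stmt12_general {Ω : Type*} [MeasurableSpace Ω] (μ : Measure Ω) [IsProbabilityMeasure μ]
    {p d : ℕ} (X : Ω → Fin p → ℝ) (Z Y : Ω → Fin d → ℝ)
    (hX : Measurable X) (hZ : Measurable Z) (hY : Measurable Y)
    (hZb : ∃ M, ∀ ω, ‖Z ω‖ ≤ M) (hYb : ∃ M, ∀ ω, ‖Y ω‖ ≤ M)
    (C : Ω → ℝ) (hC : ∀ ω, C ω = Z ω ⬝ᵥ Y ω)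
    (f₀ : (Fin p → ℝ) → Fin d → ℝ) (hf₀ : Measurable f₀) (hf₀b : ∃ M, ∀ x, ‖f₀ x‖ ≤ M)
    (S₀ : (Fin p → ℝ) → Matrix (Fin d) (Fin d) ℝ)
    (hS₀ce : ∀ i j, (fun ω => S₀ (X ω) i j) =ᵐ[μ]
      μ[(fun ω => Z ω i * Z ω j) | MeasurableSpace.comap X inferInstance])
    (hIgn : (fun ω => Z ω ⬝ᵥ f₀ (X ω)) =ᵐ[μ]
      μ[C | MeasurableSpace.comap (fun ω => (X ω, Z ω)) inferInstance])
    (f : (Fin p → ℝ) → Fin d → ℝ) (hf : Measurable f) (hfb : ∃ M, ∀ x, ‖f x‖ ≤ M)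
    (H : (Fin p → ℝ) → Matrix (Fin d) (Fin d) ℝ)
    (hH : ∀ i j, Measurable fun x => H x i j)
    (hHb : ∃ M, ∀ x i j, |H x i j| ≤ M)
    (π : (Fin p → ℝ) → Fin d → ℝ) (hπ : Measurable π) (hπb : ∃ M, ∀ x, ‖π x‖ ≤ M) :
    (∫ ω, (f (X ω) + (H (X ω)).mulVec ((C ω - Z ω ⬝ᵥ f (X ω)) • Z ω)) ⬝ᵥ π (X ω) ∂μ) -
        ∫ ω, f₀ (X ω) ⬝ᵥ π (X ω) ∂μ =
      ∫ ω, π (X ω) ⬝ᵥ (1 - H (X ω) * S₀ (X ω)).mulVec (f (X ω) - f₀ (X ω)) ∂μ := by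
  obtain ⟨MZ, hMZ⟩ := hZb
  obtain ⟨MY, hMY⟩ := hYb
  obtain ⟨Mf₀, hMf₀⟩ := hf₀b
  obtain ⟨Mf, hMf⟩ := hfb
  obtain ⟨MH, hMH⟩ := hHb
  obtain ⟨Mπ, hMπ⟩ := hπb
  have hX₁ := comap_measurable (m := inferInstance) X
  have hXZ := comap_measurable (m := inferInstance) fun ω => (X ω, Z ω)
  have hZb' := memLp_top_apply_of_norm_le (μ := μ) hZ hMZ
  have hCb : MemLp C ∞ μ :=
    (funext hC : C = _) ▸ memLp_dotProduct hZb' (memLp_top_apply_of_norm_le hY hMY)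
  exact integral_doublyRobust_sub_integral (measurable_fst.comp hXZ).comap_le
    (hX.prodMk hZ).comap_le
    (fun i => (measurable_pi_apply i).comp (hf.comp hX₁))
    (fun i => (measurable_pi_apply i).comp (hf₀.comp hX₁))
    (fun i => (measurable_pi_apply i).comp (hπ.comp hX₁))
    (fun i j => (hH i j).comp hX₁)
    (fun i => (measurable_pi_apply i).comp (measurable_snd.comp hXZ))
    (memLp_top_apply_of_norm_le (F := fun ω => f (X ω)) (hf.comp hX) fun ω => hMf (X ω))
    (memLp_top_apply_of_norm_le (F := fun ω => f₀ (X ω)) (hf₀.comp hX) fun ω => hMf₀ (X ω))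
    (memLp_top_apply_of_norm_le (F := fun ω => π (X ω)) (hπ.comp hX) fun ω => hMπ (X ω))
    (fun i j => memLp_top_of_bound ((hH i j).comp hX).aestronglyMeasurable MH
      (ae_of_all _ fun ω => hMH (X ω) i j))
    hZb' hCb hS₀ce hIgn

/-- The bias identity for the doubly robust score (from the proofs of Propositions 1
and 2): under ignorability, for any bounded measurable `f`, `H` and any policy `π`,
`E[(f(X) + H(X) Z (C - Zᵀ f(X)))ᵀ π(X)] - E[f₀(X)ᵀ π(X)]
  = E[π(X)ᵀ (I - H(X) Σ₀(X)) (f(X) - f₀(X))]`. -/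
theorem stmt12 {Ω : Type*} [MeasurableSpace Ω] (μ : Measure Ω) [IsProbabilityMeasure μ]
    {p d : ℕ} (X : Ω → Fin p → ℝ) (Z Y : Ω → Fin d → ℝ)
    (hX : Measurable X) (hZ : Measurable Z) (hY : Measurable Y)
    (hZb : ∃ M, ∀ ω, ‖Z ω‖ ≤ M) (hYb : ∃ M, ∀ ω, ‖Y ω‖ ≤ M)
    (C : Ω → ℝ) (hC : ∀ ω, C ω = Z ω ⬝ᵥ Y ω)
    (f₀ : (Fin p → ℝ) → Fin d → ℝ) (hf₀ : Measurable f₀) (hf₀b : ∃ M, ∀ x, ‖f₀ x‖ ≤ M)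
    (hf₀ce : ∀ j, (fun ω => f₀ (X ω) j) =ᵐ[μ]
      μ[(fun ω => Y ω j) | MeasurableSpace.comap X inferInstance])
    (S₀ : (Fin p → ℝ) → Matrix (Fin d) (Fin d) ℝ)
    (hS₀ : ∀ i j, Measurable fun x => S₀ x i j)
    (hS₀b : ∃ M, ∀ x i j, |S₀ x i j| ≤ M)
    (hS₀ce : ∀ i j, (fun ω => S₀ (X ω) i j) =ᵐ[μ]
      μ[(fun ω => Z ω i * Z ω j) | MeasurableSpace.comap X inferInstance])
    (hIgn : (fun ω => Z ω ⬝ᵥ f₀ (X ω)) =ᵐ[μ]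
      μ[C | MeasurableSpace.comap (fun ω => (X ω, Z ω)) inferInstance])
    (f : (Fin p → ℝ) → Fin d → ℝ) (hf : Measurable f) (hfb : ∃ M, ∀ x, ‖f x‖ ≤ M)
    (H : (Fin p → ℝ) → Matrix (Fin d) (Fin d) ℝ)
    (hH : ∀ i j, Measurable fun x => H x i j)
    (hHb : ∃ M, ∀ x i j, |H x i j| ≤ M)
    (π : (Fin p → ℝ) → Fin d → ℝ) (hπ : Measurable π) (hπb : ∃ M, ∀ x, ‖π x‖ ≤ M) :
    (∫ ω, (f (X ω) + (H (X ω)).mulVec ((C ω - Z ω ⬝ᵥ f (X ω)) • Z ω)) ⬝ᵥ π (X ω) ∂μ) -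
        ∫ ω, f₀ (X ω) ⬝ᵥ π (X ω) ∂μ =
      ∫ ω, π (X ω) ⬝ᵥ (1 - H (X ω) * S₀ (X ω)).mulVec (f (X ω) - f₀ (X ω)) ∂μ :=
  stmt12_general μ X Z Y hX hZ hY hZb hYb C hC f₀ hf₀ hf₀b S₀ hS₀ce hIgn f hf hfb H hH hHb π hπ hπb
end

section
/- Assume ignorability and that ‖f₀(x)‖ ≤ 1 for all x. Let G₀ : ℝ^p → ℝ^{d×d} be a bounded measurable matrix-valued function such that, almost surely, G₀(X) satisfies the Penrose equations for Σ₀(X), and let H : ℝ^p → ℝ^{d×d} be any bounded measurable matrix-valued function. Then for any policies π, π' with ‖π(x)‖ ≤ B and ‖π'(x)‖ ≤ B for all x: |E[((H(X) − G₀(X)) Z C)ᵀ (π(X) − π'(X))]| ≤ 2B · (E[‖(H(X) − G₀(X)) Σ₀(X)‖²_Fro])^(1/2), where ‖·‖_Fro denotes the Frobenius norm. -/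
/-!
Since `H - G₀` and `π - π'` are functions of `X`, the integrand is `(wᵀZ) C` with
`w = (H - G₀)(X)ᵀ (π - π')(X)` a bounded `σ(X)`-measurable vector. Conditioning on `(X, Z)`,
ignorability replaces `C` by `Zᵀ f₀(X)`; conditioning then on `X` replaces `Z Zᵀ` by `Σ₀(X)`.
Hence the expectation equals `E[((H - G₀) Σ₀ f₀)(X)ᵀ (π - π')(X)]`, whose integrand is bounded
pointwise by `2B ‖((H - G₀) Σ₀)(X)‖_Fro` (Cauchy–Schwarz, `‖f₀‖ ≤ 1`), and `E[F] ≤ E[F²]^{1/2}`.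
-/

open MeasureTheory Matrix

/-- `G` satisfies the four Penrose equations for `S`. -/
def Penrose {d : ℕ} (S G : Matrix (Fin d) (Fin d) ℝ) : Prop :=
  S * G * S = S ∧ G * S * G = G ∧ (S * G)ᵀ = S * G ∧ (G * S)ᵀ = G * S

/-- Euclidean norm of a vector in `ℝ^d`. -/
noncomputable def eucNorm {d : ℕ} (v : Fin d → ℝ) : ℝ := Real.sqrt (∑ i, v i ^ 2)

/-- Frobenius norm of a real `d × d` matrix. -/
noncomputable def frobNorm {d : ℕ} (M : Matrix (Fin d) (Fin d) ℝ) : ℝ :=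
  Real.sqrt (∑ i, ∑ j, M i j ^ 2)

open scoped ENNReal

section Norms

variable {d : ℕ}

lemma eucNorm_nonneg (v : Fin d → ℝ) : 0 ≤ eucNorm v := Real.sqrt_nonneg _

lemma eucNorm_eq_norm (v : Fin d → ℝ) : eucNorm v = ‖WithLp.toLp 2 v‖ := by
  simp [eucNorm, EuclideanSpace.norm_eq]

lemma abs_apply_le_eucNorm (v : Fin d → ℝ) (i : Fin d) : |v i| ≤ eucNorm v := by
  simpa [eucNorm_eq_norm] using PiLp.norm_apply_le (WithLp.toLp 2 v) i

lemma eucNorm_sub_le (v w : Fin d → ℝ) : eucNorm (v - w) ≤ eucNorm v + eucNorm w := by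
  simpa [eucNorm_eq_norm] using norm_sub_le (WithLp.toLp 2 v) (WithLp.toLp 2 w)

lemma abs_dotProduct_le (v w : Fin d → ℝ) : |v ⬝ᵥ w| ≤ eucNorm v * eucNorm w := by
  simpa [eucNorm_eq_norm, EuclideanSpace.inner_toLp_toLp, dotProduct_comm, mul_comm]
    using abs_real_inner_le_norm (WithLp.toLp 2 v) (WithLp.toLp 2 w)

lemma eucNorm_sq (v : Fin d → ℝ) : eucNorm v ^ 2 = ∑ i, v i ^ 2 :=
  Real.sq_sqrt (Finset.sum_nonneg fun _ _ => sq_nonneg _)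

lemma frobNorm_sq (M : Matrix (Fin d) (Fin d) ℝ) : frobNorm M ^ 2 = ∑ i, ∑ j, M i j ^ 2 :=
  Real.sq_sqrt (Finset.sum_nonneg fun _ _ => Finset.sum_nonneg fun _ _ => sq_nonneg _)

lemma eucNorm_mulVec_le (M : Matrix (Fin d) (Fin d) ℝ) (v : Fin d → ℝ) :
    eucNorm (M *ᵥ v) ≤ frobNorm M * eucNorm v := by
  have hrow : ∀ i, (M *ᵥ v) i ^ 2 ≤ (∑ j, M i j ^ 2) * eucNorm v ^ 2 := fun i => by
    rw [← eucNorm_sq (M i), ← mul_pow, ← sq_abs]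
    exact pow_le_pow_left₀ (abs_nonneg _) (abs_dotProduct_le (M i) v) 2
  calc eucNorm (M *ᵥ v) ≤ √((∑ i, ∑ j, M i j ^ 2) * eucNorm v ^ 2) :=
        Real.sqrt_le_sqrt (by rw [Finset.sum_mul]; exact Finset.sum_le_sum fun i _ => hrow i)
    _ = frobNorm M * eucNorm v := by
        rw [Real.sqrt_mul' _ (sq_nonneg _), Real.sqrt_sq (eucNorm_nonneg v)]; rfl

lemma abs_mulVec_dotProduct_sub_le {M : Matrix (Fin d) (Fin d) ℝ} {u v v' : Fin d → ℝ} {B : ℝ}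
    (hu : eucNorm u ≤ 1) (hv : eucNorm v ≤ B) (hv' : eucNorm v' ≤ B) :
    |M *ᵥ u ⬝ᵥ (v - v')| ≤ 2 * B * frobNorm M := by
  have hM : 0 ≤ frobNorm M := Real.sqrt_nonneg _
  have hvv' : eucNorm (v - v') ≤ B + B := (eucNorm_sub_le v v').trans (add_le_add hv hv')
  calc |M *ᵥ u ⬝ᵥ (v - v')| ≤ frobNorm M * eucNorm u * eucNorm (v - v') :=
        (abs_dotProduct_le _ _).trans
          (mul_le_mul_of_nonneg_right (eucNorm_mulVec_le M u) (eucNorm_nonneg _))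
    _ ≤ frobNorm M * 1 * (B + B) := by gcongr; exact eucNorm_nonneg _
    _ = 2 * B * frobNorm M := by ring

end Norms

section Bounded

variable {Ω : Type*} {m m₀ : MeasurableSpace Ω} {μ : Measure Ω} {d : ℕ}

lemma memLp_top_of_abs_le {f : Ω → ℝ} (hf : Measurable[m₀] f) {M : ℝ} (hM : ∀ ω, |f ω| ≤ M) :
    MemLp f ∞ μ :=
  memLp_top_of_bound hf.aestronglyMeasurable M (ae_of_all _ hM)

lemma memLp_top_comp_of_abs_le {α : Type*} [MeasurableSpace α] {X : Ω → α} (hX : Measurable[m₀] X)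
    {g : α → ℝ} (hg : Measurable g) {M : ℝ} (hM : ∀ x, |g x| ≤ M) :
    MemLp (fun ω => g (X ω)) ∞ μ :=
  memLp_top_of_abs_le (hg.comp hX) fun ω => hM (X ω)

lemma memLp_top_apply_of_norm_le_s18 {ι : Type*} [Fintype ι] {Z : Ω → ι → ℝ} (hZ : Measurable[m₀] Z)
    {M : ℝ} (hM : ∀ ω, ‖Z ω‖ ≤ M) (j : ι) : MemLp (fun ω => Z ω j) ∞ μ :=
  memLp_top_of_abs_le (measurable_pi_iff.1 hZ j) fun ω => (norm_le_pi_norm (Z ω) j).trans (hM ω)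

lemma memLp_top_apply_comp_of_eucNorm_le {α : Type*} [MeasurableSpace α] {X : Ω → α}
    (hX : Measurable[m₀] X) {ρ : α → Fin d → ℝ} (hρ : Measurable ρ) {B : ℝ}
    (hB : ∀ x, eucNorm (ρ x) ≤ B) (i : Fin d) : MemLp (fun ω => ρ (X ω) i) ∞ μ :=
  memLp_top_comp_of_abs_le hX (measurable_pi_iff.1 hρ i)
    fun x => (abs_apply_le_eucNorm _ i).trans (hB x)

lemma stronglyMeasurable_dotProduct {a b : Ω → Fin d → ℝ}
    (ha : ∀ j, StronglyMeasurable[m] fun ω => a ω j)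
    (hb : ∀ j, StronglyMeasurable[m] fun ω => b ω j) :
    StronglyMeasurable[m] fun ω => a ω ⬝ᵥ b ω :=
  Finset.stronglyMeasurable_fun_sum _ fun j _ => (ha j).mul (hb j)

lemma memLp_top_dotProduct {a b : Ω → Fin d → ℝ} (ha : ∀ j, MemLp (fun ω => a ω j) ∞ μ)
    (hb : ∀ j, MemLp (fun ω => b ω j) ∞ μ) : MemLp (fun ω => a ω ⬝ᵥ b ω) ∞ μ :=
  memLp_finsetSum _ fun j _ => (hb j).mul' (ha j)

lemma memLp_two_frobNorm [IsFiniteMeasure μ] {M : Ω → Matrix (Fin d) (Fin d) ℝ}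
    (hM : ∀ i j, MemLp (fun ω => M ω i j) 2 μ) : MemLp (fun ω => frobNorm (M ω)) 2 μ := by
  refine (memLp_two_iff_integrable_sq ?_).2 ?_
  · exact Real.continuous_sqrt.comp_aestronglyMeasurable
      (Finset.aestronglyMeasurable_fun_sum _ fun i _ => Finset.aestronglyMeasurable_fun_sum _
        fun j _ => (hM i j).1.pow 2)
  · simp only [frobNorm_sq]
    exact integrable_finsetSum _ fun i _ => integrable_finsetSum _ fun j _ => (hM i j).integrable_sq

end Bounded

section Integrals

variable {Ω : Type*} [MeasurableSpace Ω] {μ : Measure Ω}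

lemma integral_sum_sum {ι κ : Type*} [Fintype ι] [Fintype κ] {f : ι → κ → Ω → ℝ}
    (hf : ∀ i j, Integrable (f i j) μ) :
    ∫ ω, ∑ i, ∑ j, f i j ω ∂μ = ∑ i, ∑ j, ∫ ω, f i j ω ∂μ := by
  rw [integral_finsetSum _ fun i _ => integrable_finsetSum _ fun j _ => hf i j]
  exact Finset.sum_congr rfl fun i _ => integral_finsetSum _ fun j _ => hf i j

lemma integral_le_sqrt_integral_sq [IsProbabilityMeasure μ] {f : Ω → ℝ} (hf : MemLp f 2 μ) :
    ∫ ω, f ω ∂μ ≤ √(∫ ω, f ω ^ 2 ∂μ) := by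
  have h := ProbabilityTheory.variance_nonneg f μ
  rw [ProbabilityTheory.variance_eq_sub hf] at h
  exact Real.le_sqrt_of_sq_le (by simpa using h)

lemma abs_integral_le_mul_sqrt_integral_sq [IsProbabilityMeasure μ] {g F : Ω → ℝ} {c : ℝ}
    (hc : 0 ≤ c) (hF : MemLp F 2 μ) (hgF : ∀ ω, |g ω| ≤ c * F ω) :
    |∫ ω, g ω ∂μ| ≤ c * √(∫ ω, F ω ^ 2 ∂μ) :=
  calc |∫ ω, g ω ∂μ| = ‖∫ ω, g ω ∂μ‖ := (Real.norm_eq_abs _).symm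
    _ ≤ ∫ ω, c * F ω ∂μ :=
        norm_integral_le_of_norm_le ((hF.integrable one_le_two).const_mul c) (ae_of_all _ hgF)
    _ = c * ∫ ω, F ω ∂μ := integral_const_mul c _
    _ ≤ c * √(∫ ω, F ω ^ 2 ∂μ) := mul_le_mul_of_nonneg_left (integral_le_sqrt_integral_sq hF) hc

end Integrals

section CondExp

variable {Ω : Type*} {m m' m₀ : MeasurableSpace Ω} {μ : Measure Ω} {d : ℕ}

lemma integral_mul_of_ae_eq_condExp [IsFiniteMeasure μ] (hm : m ≤ m₀) {φ f g : Ω → ℝ}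
    (hφ : StronglyMeasurable[m] φ) (hφ_top : MemLp φ ∞ μ) (hf : Integrable f μ)
    (hg : g =ᵐ[μ] μ[f | m]) :
    ∫ ω, φ ω * f ω ∂μ = ∫ ω, φ ω * g ω ∂μ := by
  have hφf : Integrable (φ * f) μ := hf.smul_of_top_right hφ_top
  rw [← integral_condExp hm]
  refine integral_congr_ae ?_
  filter_upwards [condExp_mul_of_stronglyMeasurable_left hφ hφf hf, hg] with ω hω hgω
  rw [hgω]
  exact hω

lemma integral_dotProduct_mul_dotProduct_of_ae_eq_condExp [IsFiniteMeasure μ] (hm : m ≤ m₀)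
    {Z : Ω → Fin d → ℝ} (hZ : ∀ j, MemLp (fun ω => Z ω j) 2 μ)
    {S : Ω → Matrix (Fin d) (Fin d) ℝ}
    (hS : ∀ j k, (fun ω => S ω j k) =ᵐ[μ] μ[fun ω => Z ω j * Z ω k | m])
    {a b : Ω → Fin d → ℝ}
    (ha : ∀ j, StronglyMeasurable[m] fun ω => a ω j) (ha_top : ∀ j, MemLp (fun ω => a ω j) ∞ μ)
    (hb : ∀ j, StronglyMeasurable[m] fun ω => b ω j) (hb_top : ∀ j, MemLp (fun ω => b ω j) ∞ μ) :
    ∫ ω, (a ω ⬝ᵥ Z ω) * (Z ω ⬝ᵥ b ω) ∂μ = ∫ ω, a ω ⬝ᵥ S ω *ᵥ b ω ∂μ := by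
  have hZZ : ∀ j k, Integrable (fun ω => Z ω j * Z ω k) μ := fun j k =>
    (hZ j).integrable_mul (hZ k)
  have hS_int : ∀ j k, Integrable (fun ω => S ω j k) μ := fun j k =>
    integrable_condExp.congr (hS j k).symm
  have hab_top : ∀ j k, MemLp (fun ω => a ω j * b ω k) ∞ μ := fun j k =>
    (hb_top k).mul' (ha_top j)
  calc ∫ ω, (a ω ⬝ᵥ Z ω) * (Z ω ⬝ᵥ b ω) ∂μ
      = ∫ ω, ∑ j, ∑ k, (a ω j * b ω k) * (Z ω j * Z ω k) ∂μ := by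
        congr 1 with ω
        simp only [dotProduct, Finset.sum_mul_sum]
        exact Finset.sum_congr rfl fun j _ => Finset.sum_congr rfl fun k _ => by ring
    _ = ∑ j, ∑ k, ∫ ω, (a ω j * b ω k) * (Z ω j * Z ω k) ∂μ :=
        integral_sum_sum fun j k => (hZZ j k).smul_of_top_right (hab_top j k)
    _ = ∑ j, ∑ k, ∫ ω, (a ω j * b ω k) * S ω j k ∂μ :=
        Finset.sum_congr rfl fun j _ => Finset.sum_congr rfl fun k _ =>
          integral_mul_of_ae_eq_condExp hm ((ha j).mul (hb k)) (hab_top j k) (hZZ j k) (hS j k)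
    _ = ∫ ω, ∑ j, ∑ k, (a ω j * b ω k) * S ω j k ∂μ :=
        (integral_sum_sum fun j k => (hS_int j k).smul_of_top_right (hab_top j k)).symm
    _ = ∫ ω, a ω ⬝ᵥ S ω *ᵥ b ω ∂μ := by
        congr 1 with ω
        simp only [dotProduct, mulVec, Finset.mul_sum]
        exact Finset.sum_congr rfl fun j _ => Finset.sum_congr rfl fun k _ => by ring

lemma integral_mulVec_smul_dotProduct_of_ae_eq_condExp [IsFiniteMeasure μ] (hmm' : m ≤ m')
    (hm' : m' ≤ m₀) {Z : Ω → Fin d → ℝ} (hZ : ∀ j, StronglyMeasurable[m'] fun ω => Z ω j)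
    (hZ_top : ∀ j, MemLp (fun ω => Z ω j) ∞ μ)
    {C : Ω → ℝ} (hC : Integrable C μ) {f : Ω → Fin d → ℝ}
    (hf : ∀ j, StronglyMeasurable[m] fun ω => f ω j) (hf_top : ∀ j, MemLp (fun ω => f ω j) ∞ μ)
    (hCf : (fun ω => Z ω ⬝ᵥ f ω) =ᵐ[μ] μ[C | m'])
    {S : Ω → Matrix (Fin d) (Fin d) ℝ}
    (hS : ∀ j k, (fun ω => S ω j k) =ᵐ[μ] μ[fun ω => Z ω j * Z ω k | m])
    {A : Ω → Matrix (Fin d) (Fin d) ℝ} (hA : ∀ i j, StronglyMeasurable[m] fun ω => A ω i j)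
    (hA_top : ∀ i j, MemLp (fun ω => A ω i j) ∞ μ)
    {v : Ω → Fin d → ℝ} (hv : ∀ i, StronglyMeasurable[m] fun ω => v ω i)
    (hv_top : ∀ i, MemLp (fun ω => v ω i) ∞ μ) :
    ∫ ω, A ω *ᵥ (C ω • Z ω) ⬝ᵥ v ω ∂μ = ∫ ω, (A ω * S ω) *ᵥ f ω ⬝ᵥ v ω ∂μ := by
  set w : Ω → Fin d → ℝ := fun ω => v ω ᵥ* A ω
  have hw : ∀ j, StronglyMeasurable[m] fun ω => w ω j := fun j =>
    stronglyMeasurable_dotProduct hv fun i => hA i j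
  have hw_top : ∀ j, MemLp (fun ω => w ω j) ∞ μ := fun j =>
    memLp_top_dotProduct hv_top fun i => hA_top i j
  calc ∫ ω, A ω *ᵥ (C ω • Z ω) ⬝ᵥ v ω ∂μ = ∫ ω, (w ω ⬝ᵥ Z ω) * C ω ∂μ := by
        congr 1 with ω
        rw [mulVec_smul, smul_dotProduct, dotProduct_comm, dotProduct_mulVec, smul_eq_mul,
          mul_comm]
    _ = ∫ ω, (w ω ⬝ᵥ Z ω) * (Z ω ⬝ᵥ f ω) ∂μ :=
        integral_mul_of_ae_eq_condExp hm'
          (stronglyMeasurable_dotProduct (fun j => (hw j).mono hmm') hZ)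
          (memLp_top_dotProduct hw_top hZ_top) hC hCf
    _ = ∫ ω, w ω ⬝ᵥ S ω *ᵥ f ω ∂μ :=
        integral_dotProduct_mul_dotProduct_of_ae_eq_condExp (hmm'.trans hm')
          (fun j => (hZ_top j).mono_exponent le_top) hS hw hw_top hf hf_top
    _ = ∫ ω, (A ω * S ω) *ᵥ f ω ⬝ᵥ v ω ∂μ := by
        congr 1 with ω
        rw [← dotProduct_mulVec, mulVec_mulVec, dotProduct_comm]

end CondExp

theorem stmt18_general {Ω : Type*} [MeasurableSpace Ω] (μ : Measure Ω) [IsProbabilityMeasure μ]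
    {p d : ℕ} (X : Ω → Fin p → ℝ) (Z Y : Ω → Fin d → ℝ)
    (hX : Measurable X) (hZ : Measurable Z) (hY : Measurable Y)
    (hZb : ∃ M, ∀ ω, ‖Z ω‖ ≤ M) (hYb : ∃ M, ∀ ω, ‖Y ω‖ ≤ M)
    (C : Ω → ℝ) (hC : ∀ ω, C ω = Z ω ⬝ᵥ Y ω)
    (f₀ : (Fin p → ℝ) → Fin d → ℝ) (hf₀ : Measurable f₀)
    (hf₀b : ∀ x, eucNorm (f₀ x) ≤ 1)
    (S₀ : (Fin p → ℝ) → Matrix (Fin d) (Fin d) ℝ)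
    (hS₀ : ∀ i j, Measurable fun x => S₀ x i j)
    (hS₀b : ∃ M, ∀ x i j, |S₀ x i j| ≤ M)
    (hS₀ce : ∀ i j, (fun ω => S₀ (X ω) i j) =ᵐ[μ]
      μ[(fun ω => Z ω i * Z ω j) | MeasurableSpace.comap X inferInstance])
    (hIgn : (fun ω => Z ω ⬝ᵥ f₀ (X ω)) =ᵐ[μ]
      μ[C | MeasurableSpace.comap (fun ω => (X ω, Z ω)) inferInstance])
    (G₀ : (Fin p → ℝ) → Matrix (Fin d) (Fin d) ℝ)
    (hG₀ : ∀ i j, Measurable fun x => G₀ x i j)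
    (hG₀b : ∃ M, ∀ x i j, |G₀ x i j| ≤ M)
    (H : (Fin p → ℝ) → Matrix (Fin d) (Fin d) ℝ)
    (hH : ∀ i j, Measurable fun x => H x i j)
    (hHb : ∃ M, ∀ x i j, |H x i j| ≤ M)
    (π π' : (Fin p → ℝ) → Fin d → ℝ) (hπ : Measurable π) (hπ' : Measurable π')
    (B : ℝ) (hB : 0 < B)
    (hπB : ∀ x, eucNorm (π x) ≤ B) (hπ'B : ∀ x, eucNorm (π' x) ≤ B) :
    |∫ ω, (H (X ω) - G₀ (X ω)).mulVec (C ω • Z ω) ⬝ᵥ (π (X ω) - π' (X ω)) ∂μ| ≤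
      2 * B * Real.sqrt (∫ ω, frobNorm ((H (X ω) - G₀ (X ω)) * S₀ (X ω)) ^ 2 ∂μ) := by
  obtain ⟨MZ, hMZ⟩ := hZb
  obtain ⟨MY, hMY⟩ := hYb
  obtain ⟨MS, hMS⟩ := hS₀b
  obtain ⟨MG, hMG⟩ := hG₀b
  obtain ⟨MH, hMH⟩ := hHb
  have hXZ := comap_measurable (m := inferInstance) fun ω => (X ω, Z ω)
  have hmX : MeasurableSpace.comap X inferInstance ≤
      MeasurableSpace.comap (fun ω => (X ω, Z ω)) inferInstance :=
    Measurable.comap_le (f := X) (measurable_fst.comp hXZ)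
  have hσX : ∀ {g : (Fin p → ℝ) → ℝ}, Measurable g →
      StronglyMeasurable[MeasurableSpace.comap X inferInstance] fun ω => g (X ω) := fun hg =>
    (hg.comp (comap_measurable X)).stronglyMeasurable
  have hZ_top := memLp_top_apply_of_norm_le_s18 (μ := μ) hZ hMZ
  have hC_int : Integrable C μ :=
    ((memLp_top_dotProduct hZ_top (memLp_top_apply_of_norm_le_s18 hY hMY)).integrable le_top).congr
      (ae_of_all _ fun ω => (hC ω).symm)
  have hA_top : ∀ i j, MemLp (fun ω => (H (X ω) - G₀ (X ω)) i j) ∞ μ := fun i j =>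
    (memLp_top_comp_of_abs_le hX (hH i j) (hMH · i j)).sub
      (memLp_top_comp_of_abs_le hX (hG₀ i j) (hMG · i j))
  rw [integral_mulVec_smul_dotProduct_of_ae_eq_condExp (μ := μ)
    (A := fun ω => H (X ω) - G₀ (X ω)) (v := fun ω => π (X ω) - π' (X ω))
    (Z := Z) (f := fun ω => f₀ (X ω)) (S := fun ω => S₀ (X ω)) hmX (hX.prodMk hZ).comap_le
    (fun j => (((measurable_pi_apply j).comp measurable_snd).comp hXZ).stronglyMeasurable)
    hZ_top hC_int (fun k => hσX (measurable_pi_iff.1 hf₀ k))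
    (memLp_top_apply_comp_of_eucNorm_le hX hf₀ hf₀b)
    hIgn hS₀ce (fun i j => hσX ((hH i j).sub (hG₀ i j))) hA_top
    (fun i => hσX ((measurable_pi_iff.1 hπ i).sub (measurable_pi_iff.1 hπ' i)))
    fun i => (memLp_top_apply_comp_of_eucNorm_le hX hπ hπB i).sub
      (memLp_top_apply_comp_of_eucNorm_le hX hπ' hπ'B i)]
  refine abs_integral_le_mul_sqrt_integral_sq (by positivity) (memLp_two_frobNorm fun i j => ?_)
    fun ω => abs_mulVec_dotProduct_sub_le (hf₀b _) (hπB _) (hπ'B _)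
  exact (memLp_top_dotProduct (hA_top i) fun k =>
    memLp_top_comp_of_abs_le hX (hS₀ k j) (hMS · k j)).mono_exponent le_top

/-- The inverse-spectral-weighting nuisance-error bound from the proof of Proposition 2,
part 2: under ignorability with `‖f₀(x)‖ ≤ 1`, if `G₀(X)` is a.s. a Penrose pseudo-inverse
of `Σ₀(X)` and `π, π'` are policies with Euclidean norm at most `B`, then
`|E[((H(X) - G₀(X)) Z C)ᵀ (π(X) - π'(X))]| ≤ 2B (E[‖(H(X) - G₀(X)) Σ₀(X)‖²_Fro])^{1/2}`. -/
theorem stmt18 {Ω : Type*} [MeasurableSpace Ω] (μ : Measure Ω) [IsProbabilityMeasure μ]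
    {p d : ℕ} (X : Ω → Fin p → ℝ) (Z Y : Ω → Fin d → ℝ)
    (hX : Measurable X) (hZ : Measurable Z) (hY : Measurable Y)
    (hZb : ∃ M, ∀ ω, ‖Z ω‖ ≤ M) (hYb : ∃ M, ∀ ω, ‖Y ω‖ ≤ M)
    (C : Ω → ℝ) (hC : ∀ ω, C ω = Z ω ⬝ᵥ Y ω)
    (f₀ : (Fin p → ℝ) → Fin d → ℝ) (hf₀ : Measurable f₀)
    (hf₀b : ∀ x, eucNorm (f₀ x) ≤ 1)
    (hf₀ce : ∀ j, (fun ω => f₀ (X ω) j) =ᵐ[μ]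
      μ[(fun ω => Y ω j) | MeasurableSpace.comap X inferInstance])
    (S₀ : (Fin p → ℝ) → Matrix (Fin d) (Fin d) ℝ)
    (hS₀ : ∀ i j, Measurable fun x => S₀ x i j)
    (hS₀b : ∃ M, ∀ x i j, |S₀ x i j| ≤ M)
    (hS₀ce : ∀ i j, (fun ω => S₀ (X ω) i j) =ᵐ[μ]
      μ[(fun ω => Z ω i * Z ω j) | MeasurableSpace.comap X inferInstance])
    (hIgn : (fun ω => Z ω ⬝ᵥ f₀ (X ω)) =ᵐ[μ]
      μ[C | MeasurableSpace.comap (fun ω => (X ω, Z ω)) inferInstance])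
    (G₀ : (Fin p → ℝ) → Matrix (Fin d) (Fin d) ℝ)
    (hG₀ : ∀ i j, Measurable fun x => G₀ x i j)
    (hG₀b : ∃ M, ∀ x i j, |G₀ x i j| ≤ M)
    (hPen : ∀ᵐ ω ∂μ, Penrose (S₀ (X ω)) (G₀ (X ω)))
    (H : (Fin p → ℝ) → Matrix (Fin d) (Fin d) ℝ)
    (hH : ∀ i j, Measurable fun x => H x i j)
    (hHb : ∃ M, ∀ x i j, |H x i j| ≤ M)
    (π π' : (Fin p → ℝ) → Fin d → ℝ) (hπ : Measurable π) (hπ' : Measurable π')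
    (B : ℝ) (hB : 0 < B)
    (hπB : ∀ x, eucNorm (π x) ≤ B) (hπ'B : ∀ x, eucNorm (π' x) ≤ B) :
    |∫ ω, (H (X ω) - G₀ (X ω)).mulVec (C ω • Z ω) ⬝ᵥ (π (X ω) - π' (X ω)) ∂μ| ≤
      2 * B * Real.sqrt (∫ ω, frobNorm ((H (X ω) - G₀ (X ω)) * S₀ (X ω)) ^ 2 ∂μ) :=
  stmt18_general μ X Z Y hX hZ hY hZb hYb C hC f₀ hf₀ hf₀b S₀ hS₀ hS₀b hS₀ce hIgn G₀ hG₀ hG₀b H hH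
    hHb π π' hπ hπ' B hB hπB hπ'B
end
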